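/- arXiv:1210.4190 — 2 statements merged into one kernel-verified Lean document; each statement's English description precedes it below -/
import Mathlib

section
/- Let p be a prime number and let K be a p-adic field, i.e. a finite field extension of ℚ_p. For every integer n ≥ 1, the set of monic irreducible polynomials of degree n in K[X] is infinite. -/
/-! The integral closure of `ℤ_[p]` in `K` is a Dedekind domain that is not a field, so it has a
nonzero prime `𝔭` and an element `π ∈ 𝔭 \ 𝔭²`; by Eisenstein's criterion and Gauss's lemma,
`X ^ n - π` is irreducible over `K`. In characteristic zero a nonconstant polynomial is not
periodic, so its translates `f (X + a)`, `a ∈ K`, are pairwise distinct, and they are all monic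
irreducible of the same degree. -/

open Polynomial

namespace Polynomial

theorem taylor_left_injective {R : Type*} [CommRing R] [IsDomain R] [CharZero R] {f : R[X]}
    (hf : 0 < f.natDegree) : Function.Injective fun r : R => taylor r f := by
  intro r s hrs
  by_contra hne
  have hperiodic : ∀ x, f.eval (x + (r - s)) = f.eval x := fun x => by
    simpa [taylor_eval, sub_add_eq_add_sub, add_sub_assoc] using congrArg (eval (x - s)) hrs
  have hmultiples : ∀ k : ℕ, f.eval (k * (r - s)) = f.eval 0 := by
    intro k
    induction k with
    | zero => simp
    | succ k ih => rw [Nat.cast_succ, add_one_mul, hperiodic, ih]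
  have hconst : f = C (f.eval 0) := by
    refine eq_of_infinite_eval_eq _ _ (Set.infinite_of_injective_forall_mem
      (f := fun k : ℕ => (k : R) * (r - s)) ?_ fun k => by simp [hmultiples])
    intro a b hab
    exact_mod_cast mul_right_cancel₀ (sub_ne_zero.mpr hne) hab
  rw [hconst, natDegree_C] at hf
  exact hf.false

theorem Monic.infinite_setOf_monic_irreducible_natDegree {K : Type*} [Field K] [CharZero K]
    {f : K[X]} (hm : f.Monic) (hirr : Irreducible f) :
    {g : K[X] | g.Monic ∧ Irreducible g ∧ g.natDegree = f.natDegree}.Infinite :=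
  Set.infinite_of_injective_forall_mem (taylor_left_injective hirr.natDegree_pos) fun r =>
    ⟨by rw [Monic, leadingCoeff_taylor, hm.leadingCoeff],
      hirr.map (taylorEquiv r), natDegree_taylor f r⟩

theorem isEisensteinAt_X_pow_sub_C {R : Type*} [CommRing R] {P : Ideal R} (hP : P ≠ ⊤)
    {π : R} (hπ : π ∈ P) (hπ2 : π ∉ P ^ 2) {n : ℕ} (hn : 0 < n) :
    (X ^ n - C π).IsEisensteinAt P := by
  have hP1 : (1 : R) ∉ P := (Ideal.ne_top_iff_one P).mp hP
  have : Nontrivial R := nontrivial_of_ne 0 1 fun h => hP1 (h ▸ P.zero_mem)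
  refine ⟨?_, fun {i} hi => ?_, by simpa [hn.ne] using hπ2⟩
  · rwa [(monic_X_pow_sub_C π hn.ne').leadingCoeff]
  · rw [natDegree_X_pow_sub_C] at hi
    rcases Nat.eq_zero_or_pos i with rfl | hi0
    · simpa [hn.ne] using P.neg_mem_iff.mpr hπ
    · simp [coeff_X_pow, coeff_C, hi.ne, hi0.ne', P.zero_mem]

end Polynomial

theorem IsDedekindDomain.exists_mem_notMem_sq {R : Type*} [CommRing R] [IsDedekindDomain R]
    (hR : ¬IsField R) : ∃ P : Ideal R, P.IsPrime ∧ ∃ π ∈ P, π ∉ P ^ 2 := by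
  obtain ⟨P, hP0, hP⟩ := Ring.not_isField_iff_exists_prime.mp hR
  exact ⟨P, hP, SetLike.exists_of_lt (Ideal.pow_lt_self P hP0 hP.ne_top 2 le_rfl)⟩

theorem IsDedekindDomain.exists_monic_irreducible_natDegree (R K : Type*) [CommRing R]
    [IsDedekindDomain R] [Field K] [Algebra R K] [IsFractionRing R K] (hR : ¬IsField R)
    {n : ℕ} (hn : 0 < n) : ∃ f : K[X], f.Monic ∧ Irreducible f ∧ f.natDegree = n := by
  obtain ⟨P, hP, π, hπ, hπ2⟩ := exists_mem_notMem_sq hR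
  have hmonic : (X ^ n - C π).Monic := monic_X_pow_sub_C π hn.ne'
  have hirr : Irreducible (X ^ n - C π) :=
    (isEisensteinAt_X_pow_sub_C hP.ne_top hπ hπ2 hn).irreducible hP hmonic.isPrimitive
      (by rwa [natDegree_X_pow_sub_C])
  refine ⟨X ^ n - C (algebraMap R K π), monic_X_pow_sub_C _ hn.ne', ?_, natDegree_X_pow_sub_C⟩
  simpa using (hmonic.irreducible_iff_irreducible_map_fraction_map (K := K)).mp hirr

theorem integralClosure.not_isField {A K : Type*} [CommRing A] [Field K] [Algebra A K]
    (hinj : Function.Injective (algebraMap A K)) (hA : ¬IsField A) :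
    ¬IsField (integralClosure A K) := fun h =>
  hA <| (Algebra.IsIntegral.isField_iff_isField fun _ _ hab =>
    hinj (congrArg Subtype.val hab)).mpr h

theorem exists_monic_irreducible_natDegree_of_finite_extension (A F K : Type*) [CommRing A]
    [IsDedekindDomain A] [Field F] [Algebra A F] [IsFractionRing A F] [Field K] [Algebra F K]
    [Algebra A K] [IsScalarTower A F K] [FiniteDimensional F K] [Algebra.IsSeparable F K]
    (hA : ¬IsField A) {n : ℕ} (hn : 0 < n) :
    ∃ f : K[X], f.Monic ∧ Irreducible f ∧ f.natDegree = n := by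
  have : IsDedekindDomain (integralClosure A K) := integralClosure.isDedekindDomain A F K
  have : IsFractionRing (integralClosure A K) K :=
    integralClosure.isFractionRing_of_finite_extension F K
  have hinj : Function.Injective (algebraMap A K) := by
    rw [IsScalarTower.algebraMap_eq A F K]
    exact (algebraMap F K).injective.comp (IsFractionRing.injective A F)
  exact IsDedekindDomain.exists_monic_irreducible_natDegree _ K
    (integralClosure.not_isField hinj hA) hn

/-- Over a `p`-adic field `K` (a finite extension of `ℚ_p`), for every `n ≥ 1` the set of
monic irreducible polynomials of degree `n` in `K[X]` is infinite. -/
theorem infinite_monic_irreducible_of_padic_field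
    (p : ℕ) [Fact p.Prime] (K : Type*) [Field K] [Algebra ℚ_[p] K]
    [FiniteDimensional ℚ_[p] K] (n : ℕ) (hn : 1 ≤ n) :
    {f : Polynomial K | f.Monic ∧ Irreducible f ∧ f.natDegree = n}.Infinite := by
  let : Algebra ℤ_[p] K := ((algebraMap ℚ_[p] K).comp (algebraMap ℤ_[p] ℚ_[p])).toAlgebra
  have : IsScalarTower ℤ_[p] ℚ_[p] K := IsScalarTower.of_algebraMap_eq fun _ => rfl
  have : CharZero K := charZero_of_injective_algebraMap (algebraMap ℚ_[p] K).injective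
  obtain ⟨f, hmonic, hirr, rfl⟩ := exists_monic_irreducible_natDegree_of_finite_extension
    ℤ_[p] ℚ_[p] K (IsDiscreteValuationRing.not_isField ℤ_[p]) hn
  exact hmonic.infinite_setOf_monic_irreducible_natDegree hirr
end

section
/- Let k be a number field, let S be a finite set of finite places of k, and let v₀ be a finite place of k not in S. For a finite place v denote by k_v the completion of k at v and by ‖·‖_v the associated absolute value. Let g ∈ k[X] be a monic nonconstant polynomial all of whose coefficients satisfy ‖coeff_j(g)‖_w ≤ 1 for every finite place w ∉ S ∪ {v₀}, and let d ≥ deg g be an integer. Suppose given, for each v ∈ S, a polynomial h_v ∈ k_v[X] of degree at most d that is divisible by g in k_v[X], and let ε > 0. Then there exists h ∈ k[X] of degree at most d, divisible by g in k[X], such that ‖coeff_j(h)‖_w ≤ 1 for every j and every finite place w ∉ S ∪ {v₀}, and ‖coeff_j(h) − coeff_j(h_v)‖_v < ε for every j and every v ∈ S. -/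
open scoped Multiplicative

open IsDedekindDomain

open Polynomial WithZero

/-!
Write `h_v = g q_v` with `deg q_v ≤ d - deg g`. Strong approximation, applied coefficient by
coefficient, gives `q ∈ k[X]` of degree `≤ d - deg g`, integral outside `S` and close to every
`q_v`; then `h = g q` works, because multiplication by the fixed polynomial `g` is coefficientwise
continuous and preserves integrality wherever `g` is integral.

For scalar strong approximation in a Dedekind domain `R` with fraction field `K`, first approximate
each local target by some `y_v ∈ K` (density of `K` in `K_v`), then clear denominators with
`b ∈ R`, and use the Chinese remainder theorem to find `c ∈ R` congruent to `b y_v` modulo a high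
power of each `v ∈ S` and divisible, at every other prime, by the power of that prime in `b`;
then `a = c / b` is integral outside `S` and close to each `y_v`.
-/

namespace Polynomial

theorem Monic.degree_le_of_degree_mul_le {R : Type*} [Ring R] {g q : R[X]} (hg : g.Monic) {d : ℕ}
    (h : (g * q).degree ≤ d) : q.degree ≤ (d - g.natDegree : ℕ) := by
  rw [← mul_divByMonic_cancel_left q hg]
  refine degree_le_of_natDegree_le ?_
  rw [natDegree_divByMonic _ hg]
  exact Nat.sub_le_sub_right (natDegree_le_of_degree_le h) _

variable {R Γ₀ : Type*} [Ring R] [LinearOrderedCommGroupWithZero Γ₀] (v : Valuation R Γ₀)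

theorem valuation_coeff_mul_le_one {G Q : R[X]} (hG : ∀ i, v (G.coeff i) ≤ 1)
    (hQ : ∀ j, v (Q.coeff j) ≤ 1) (j : ℕ) : v ((G * Q).coeff j) ≤ 1 := by
  rw [coeff_mul]
  exact v.map_sum_le fun p _ => (map_mul v _ _).trans_le (mul_le_one' (hG _) (hQ _))

theorem exists_valuation_coeff_le (G : R[X]) : ∃ C ≠ (0 : Γ₀), ∀ i, v (G.coeff i) ≤ C := by
  refine ⟨(Finset.range (G.natDegree + 1)).sup (fun i => v (G.coeff i)) ⊔ 1, by simp, fun i => ?_⟩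
  rcases le_or_gt i G.natDegree with hi | hi
  · exact le_sup_of_le_left (Finset.le_sup (f := fun i => v (G.coeff i)) (by simp; omega))
  · simp [coeff_eq_zero_of_natDegree_lt hi]

theorem exists_valuation_coeff_mul_lt (G : R[X]) {ε : Γ₀} (hε : ε ≠ 0) :
    ∃ δ ≠ (0 : Γ₀), ∀ Q : R[X], (∀ j, v (Q.coeff j) < δ) → ∀ j, v ((G * Q).coeff j) < ε := by
  obtain ⟨C, hC0, hC⟩ := exists_valuation_coeff_le v G
  refine ⟨C⁻¹ * ε, by simp [hε, hC0], fun Q hQ j => ?_⟩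
  rw [coeff_mul]
  refine v.map_sum_lt hε fun p _ => ?_
  calc v (G.coeff p.1 * Q.coeff p.2) = v (G.coeff p.1) * v (Q.coeff p.2) := map_mul v _ _
    _ < C * (C⁻¹ * ε) := mul_lt_mul_of_le_of_lt_of_nonneg_of_pos (hC _) (hQ _) zero_le
        (zero_lt_iff.mpr hC0)
    _ = ε := mul_inv_cancel_left₀ hC0 ε

end Polynomial

namespace IsDedekindDomain.HeightOneSpectrum

variable {R : Type*} [CommRing R] [IsDedekindDomain R] {K : Type*} [Field K] [Algebra R K]
  [IsFractionRing R K]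

theorem valuation_div_le_exp_of_mem (v : HeightOneSpectrum R) {a b : R} (hb : b ≠ 0) {n : ℕ}
    (ha : a ∈ v.asIdeal ^ (n + multiplicity v.asIdeal (Ideal.span {b}))) :
    v.valuation K (algebraMap R K a / algebraMap R K b) ≤ exp (-(n : ℤ)) := by
  rw [map_div₀, valuation_of_algebraMap, valuation_of_algebraMap,
    v.intValuation_eq_exp_neg_multiplicity hb, div_le_iff₀ exp_pos, ← exp_add]
  refine ((v.intValuation_le_pow_iff_mem a _).mpr ha).trans_eq ?_
  push_cast
  ring_nf

theorem exists_valuation_le_one_and_valuation_sub_le (S : Finset (HeightOneSpectrum R))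
    (y : HeightOneSpectrum R → K) (n : HeightOneSpectrum R → ℕ) :
    ∃ a : K, (∀ w ∉ S, w.valuation K a ≤ 1) ∧
      ∀ v ∈ S, v.valuation K (a - y v) ≤ exp (-(n v : ℤ)) := by
  classical
  obtain ⟨⟨b, hb⟩, hr⟩ := IsLocalization.exist_integer_multiples (nonZeroDivisors R) S y
  choose! r hr using hr
  have hb0 : b ≠ 0 := nonZeroDivisors.ne_zero hb
  have hspan : Ideal.span {b} ≠ 0 := by simpa [Ideal.span_singleton_eq_bot] using hb0
  set T := (Ideal.finite_factors hspan).toFinset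
  obtain ⟨c, hc⟩ := exists_forall_sub_mem_ideal (s := S ∪ T) asIdeal
    (fun w => n w + multiplicity w.asIdeal (Ideal.span {b})) (fun w _ => w.prime)
    (fun w _ w' _ hne h => hne (HeightOneSpectrum.ext h)) (fun w => if w.1 ∈ S then r w else 0)
  refine ⟨algebraMap R K c / algebraMap R K b, fun w hw => ?_, fun v hv => ?_⟩
  · suffices c ∈ w.asIdeal ^ (0 + multiplicity w.asIdeal (Ideal.span {b})) by
      simpa using valuation_div_le_exp_of_mem (K := K) w hb0 this
    by_cases hwT : w ∈ T
    · have := hc w (Finset.mem_union_right _ hwT)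
      simp only [hw, if_false, sub_zero] at this
      exact Ideal.pow_le_pow_right (by omega) this
    · have : ¬ w.asIdeal ∣ Ideal.span {b} := by simpa [T] using hwT
      simp [multiplicity_eq_zero.mpr this]
  · have hyv : y v = algebraMap R K (r v) / algebraMap R K b := by
      rw [hr v hv, Algebra.smul_def, mul_div_cancel_left₀]
      exact (map_ne_zero_iff _ (IsFractionRing.injective R K)).mpr hb0
    have := hc v (Finset.mem_union_left _ hv)
    simp only [hv, if_true] at this
    rw [hyv, ← sub_div, ← map_sub]
    exact valuation_div_le_exp_of_mem v hb0 this

theorem exists_valued_algebraMap_sub_lt (v : HeightOneSpectrum R) (x : v.adicCompletion K)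
    {γ : ℤᵐ⁰} (hγ : γ ≠ 0) : ∃ y : K, Valued.v (algebraMap K (v.adicCompletion K) y - x) < γ := by
  obtain ⟨z, rfl⟩ := valuedAdicCompletion_surjective K v γ
  have hz : Valued.v.restrict z ≠ 0 := by simpa using hγ
  exact (denseRange_algebraMap K v).mem_nhds <| Valued.mem_nhds.mpr
    ⟨Units.mk0 _ hz, fun y hy => (Valuation.restrict_lt_iff _).mp hy⟩

theorem exists_valuation_le_one_and_valued_sub_lt (S : Finset (HeightOneSpectrum R))
    (x : ∀ v ∈ S, v.adicCompletion K) (γ : ∀ v ∈ S, ℤᵐ⁰) (hγ : ∀ v (hv : v ∈ S), γ v hv ≠ 0) :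
    ∃ a : K, (∀ w ∉ S, w.valuation K a ≤ 1) ∧
      ∀ v (hv : v ∈ S), Valued.v (algebraMap K (v.adicCompletion K) a - x v hv) < γ v hv := by
  choose! y hy using fun v hv => exists_valued_algebraMap_sub_lt v (x v hv) (hγ v hv)
  choose! n hn using fun v hv => exists_exp_neg_natCast_lt (hγ v hv)
  obtain ⟨a, ha, hay⟩ := exists_valuation_le_one_and_valuation_sub_le S y n
  refine ⟨a, ha, fun v hv => ?_⟩
  rw [← sub_add_sub_cancel _ (algebraMap K _ (y v)), ← map_sub]
  refine (Valuation.map_add _ _ _).trans_lt (max_lt ?_ (hy v hv))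
  rw [algebraMap_adicCompletion, Function.comp_apply, valuedAdicCompletion_eq_valuation']
  exact (hay v hv).trans_lt (hn v hv)

theorem exists_polynomial_valuation_coeff_le_one_and_valued_coeff_sub_lt
    (S : Finset (HeightOneSpectrum R)) (m : ℕ) (p : ∀ v ∈ S, (v.adicCompletion K)[X])
    (hp : ∀ v (hv : v ∈ S), (p v hv).degree ≤ m) (γ : ∀ v ∈ S, ℤᵐ⁰)
    (hγ : ∀ v (hv : v ∈ S), γ v hv ≠ 0) :
    ∃ q : K[X], q.degree ≤ m ∧ (∀ j, ∀ w ∉ S, w.valuation K (q.coeff j) ≤ 1) ∧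
      ∀ v (hv : v ∈ S) j,
        Valued.v (algebraMap K (v.adicCompletion K) (q.coeff j) - (p v hv).coeff j) < γ v hv := by
  classical
  choose a ha hap using fun j =>
    exists_valuation_le_one_and_valued_sub_lt S (fun v hv => (p v hv).coeff j) γ hγ
  refine ⟨ofFn (m + 1) fun j => a j, ?_, fun j w hw => ?_, fun v hv j => ?_⟩
  · exact degree_le_of_natDegree_le <|
      Nat.le_of_lt_succ (ofFn_natDegree_lt (Nat.le_add_left 1 m) _)
  · rcases lt_or_ge j (m + 1) with hj | hj
    · rw [ofFn_coeff_eq_val_of_lt _ hj]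
      exact ha j w hw
    · simp [ofFn_coeff_eq_zero_of_ge _ hj]
  · rcases lt_or_ge j (m + 1) with hj | hj
    · rw [ofFn_coeff_eq_val_of_lt _ hj]
      exact hap j v hv
    · rw [ofFn_coeff_eq_zero_of_ge _ hj, coeff_eq_zero_of_degree_lt ((hp v hv).trans_lt _)]
      · simpa using (hγ v hv).bot_lt
      · exact_mod_cast hj

end IsDedekindDomain.HeightOneSpectrum

theorem strong_approximation_polynomials_divisible_general
    (k : Type*) [Field k] [NumberField k]
    (S : Finset (HeightOneSpectrum (NumberField.RingOfIntegers k)))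
    (v₀ : HeightOneSpectrum (NumberField.RingOfIntegers k))
    (g : Polynomial k) (hgm : g.Monic)
    (hgint : ∀ j, ∀ w, w ∉ S → w ≠ v₀ → w.valuation k (g.coeff j) ≤ 1)
    (d : ℕ) (hd : g.natDegree ≤ d)
    (hloc : ∀ v ∈ S, Polynomial (v.adicCompletion k))
    (hlocdeg : ∀ v (hv : v ∈ S), (hloc v hv).degree ≤ (d : ℕ))
    (hlocdvd : ∀ v (hv : v ∈ S), g.map (algebraMap k (v.adicCompletion k)) ∣ hloc v hv)
    (ε : ∀ v ∈ S, WithZero (Multiplicative ℤ)) (hε : ∀ v (hv : v ∈ S), 0 < ε v hv) :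
    ∃ h : Polynomial k, h.degree ≤ (d : ℕ) ∧ g ∣ h ∧
      (∀ j, ∀ w, w ∉ S → w ≠ v₀ → w.valuation k (h.coeff j) ≤ 1) ∧
      ∀ v (hv : v ∈ S), ∀ j,
        Valued.v (algebraMap k (v.adicCompletion k) (h.coeff j) - (hloc v hv).coeff j)
          < ε v hv := by
  choose q hq using hlocdvd
  have hqdeg v hv : (q v hv).degree ≤ (d - g.natDegree : ℕ) := by
    have := (hgm.map (algebraMap k _)).degree_le_of_degree_mul_le (hq v hv ▸ hlocdeg v hv)
    rwa [hgm.natDegree_map] at this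
  choose δ hδ hδε using fun v hv =>
    exists_valuation_coeff_mul_lt Valued.v (g.map (algebraMap k (v.adicCompletion k)))
      (hε v hv).ne'
  obtain ⟨p, hpdeg, hpint, hpq⟩ :=
    HeightOneSpectrum.exists_polynomial_valuation_coeff_le_one_and_valued_coeff_sub_lt
      S (d - g.natDegree) q hqdeg δ hδ
  refine ⟨g * p, ?_, dvd_mul_right g p, fun j w hw hw₀ => ?_, fun v hv j => ?_⟩
  · refine degree_le_of_natDegree_le ((natDegree_mul_le_of_le le_rfl
      (natDegree_le_of_degree_le hpdeg)).trans ?_)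
    omega
  · exact valuation_coeff_mul_le_one _ (hgint · w hw hw₀) (hpint · w hw) j
  · have := hδε v hv (p.map (algebraMap k _) - q v hv) (by simpa using hpq v hv) j
    rwa [mul_sub, ← hq v hv, ← Polynomial.map_mul, coeff_sub, coeff_map] at this

/-- Strong approximation for spaces of polynomials over a number field: given a finite set `S` of
finite places, an extra finite place `v₀ ∉ S`, a monic nonconstant polynomial `g` with coefficients
integral outside `S ∪ {v₀}`, an integer `d ≥ deg g`, local polynomials `h v` of degree at most `d`
divisible by `g` for `v ∈ S`, and `ε v > 0`, there is a global polynomial `h` of degree at most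
`d`, divisible by `g`, with coefficients integral outside `S ∪ {v₀}` and `ε`-close to `h v`
coefficientwise for every `v ∈ S`. -/
theorem strong_approximation_polynomials_divisible
    (k : Type*) [Field k] [NumberField k]
    (S : Finset (HeightOneSpectrum (NumberField.RingOfIntegers k)))
    (v₀ : HeightOneSpectrum (NumberField.RingOfIntegers k)) (hv₀ : v₀ ∉ S)
    (g : Polynomial k) (hgm : g.Monic) (hgdeg : 0 < g.natDegree)
    (hgint : ∀ j, ∀ w, w ∉ S → w ≠ v₀ → w.valuation k (g.coeff j) ≤ 1)
    (d : ℕ) (hd : g.natDegree ≤ d)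
    (hloc : ∀ v ∈ S, Polynomial (v.adicCompletion k))
    (hlocdeg : ∀ v (hv : v ∈ S), (hloc v hv).degree ≤ (d : ℕ))
    (hlocdvd : ∀ v (hv : v ∈ S), g.map (algebraMap k (v.adicCompletion k)) ∣ hloc v hv)
    (ε : ∀ v ∈ S, WithZero (Multiplicative ℤ)) (hε : ∀ v (hv : v ∈ S), 0 < ε v hv) :
    ∃ h : Polynomial k, h.degree ≤ (d : ℕ) ∧ g ∣ h ∧
      (∀ j, ∀ w, w ∉ S → w ≠ v₀ → w.valuation k (h.coeff j) ≤ 1) ∧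
      ∀ v (hv : v ∈ S), ∀ j,
        Valued.v (algebraMap k (v.adicCompletion k) (h.coeff j) - (hloc v hv).coeff j)
          < ε v hv :=
  strong_approximation_polynomials_divisible_general k S v₀ g hgm hgint d hd hloc hlocdeg hlocdvd ε
    hε
end
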